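/- arXiv:2201.00751 — 4 statements merged into one kernel-verified Lean document; each statement's English description precedes it below -/
import Mathlib

section
/- Let $P_0, P_1$ be probability distributions on $\mathcal{X}$ and $\varepsilon \in [0,1)$. Set $\eta = \mathrm{TV}(P_0,P_1)/(1+\mathrm{TV}(P_0,P_1))$ and suppose $\eta \geq \varepsilon$. Let $G_0, G_1$ be distributions with $(1-\eta)P_0 + \eta G_0 = (1-\eta)P_1 + \eta G_1$, and define $M_j = (1-\varepsilon)P_j + \varepsilon G_j$ for $j = 0,1$. Then $\mathrm{TV}(M_0, M_1) = (1-\varepsilon)\{\mathrm{TV}(P_0,P_1) - \varepsilon/(1-\varepsilon)\} \leq \mathrm{TV}(P_0,P_1) - \varepsilon/(1-\varepsilon)$. -/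
open MeasureTheory ENNReal

/-- Total variation distance between two measures: `sup_S |P(S) - Q(S)|`. -/
noncomputable def tv {X : Type*} [MeasurableSpace X] (P Q : Measure X) : ℝ :=
  ⨆ S : {S : Set X // MeasurableSet S}, |(P S.1).toReal - (Q S.1).toReal|

/-- Huber mixture `(1-ε) P + ε G`. -/
noncomputable def mix {X : Type*} [MeasurableSpace X] (ε : ℝ) (P G : Measure X) : Measure X :=
  ENNReal.ofReal (1 - ε) • P + ENNReal.ofReal ε • G

lemma mix_apply_toReal {X : Type*} [MeasurableSpace X] (ε : ℝ) (hε0 : 0 ≤ ε) (hε1 : ε ≤ 1)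
    (P G : Measure X) [IsProbabilityMeasure P] [IsProbabilityMeasure G] (S : Set X) :
    ((mix ε P G) S).toReal = (1 - ε) * (P S).toReal + ε * (G S).toReal := by
  have hP : P S ≠ ⊤ := (measure_lt_top P S).ne
  have hG : G S ≠ ⊤ := (measure_lt_top G S).ne
  simp only [mix, Measure.add_apply, Measure.smul_apply, smul_eq_mul]
  rw [ENNReal.toReal_add (by finiteness) (by finiteness), ENNReal.toReal_mul,
    ENNReal.toReal_mul, ENNReal.toReal_ofReal (by linarith), ENNReal.toReal_ofReal hε0]

lemma tv_bdd {X : Type*} [MeasurableSpace X] (P Q : Measure X)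
    [IsProbabilityMeasure P] [IsProbabilityMeasure Q] :
    BddAbove (Set.range fun S : {S : Set X // MeasurableSet S} =>
      |(P S.1).toReal - (Q S.1).toReal|) := by
  refine ⟨1, ?_⟩
  rintro x ⟨S, rfl⟩
  have h1 : (P S.1).toReal ≤ 1 := by
    have := prob_le_one (μ := P) (s := S.1)
    simpa using ENNReal.toReal_le_of_le_ofReal zero_le_one (by simpa using this)
  have h2 : (Q S.1).toReal ≤ 1 := by
    have := prob_le_one (μ := Q) (s := S.1)
    simpa using ENNReal.toReal_le_of_le_ofReal zero_le_one (by simpa using this)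
  have h3 : 0 ≤ (P S.1).toReal := ENNReal.toReal_nonneg
  have h4 : 0 ≤ (Q S.1).toReal := ENNReal.toReal_nonneg
  rw [abs_sub_le_iff]; constructor <;> linarith

lemma tv_nonneg {X : Type*} [MeasurableSpace X] (P Q : Measure X)
    [IsProbabilityMeasure P] [IsProbabilityMeasure Q] : 0 ≤ tv P Q :=
  le_trans (abs_nonneg _) (le_ciSup (tv_bdd P Q) ⟨∅, MeasurableSet.empty⟩)

lemma mix_prob {X : Type*} [MeasurableSpace X] (ε : ℝ) (P G : Measure X)
    [IsProbabilityMeasure P] [IsProbabilityMeasure G] (hε0 : 0 ≤ ε) (hε1 : ε ≤ 1) :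
    IsProbabilityMeasure (mix ε P G) := by
  constructor
  simp only [mix, Measure.add_apply, Measure.smul_apply, smul_eq_mul, measure_univ, mul_one]
  rw [← ENNReal.ofReal_add (by linarith) hε0]
  norm_num

/-- With `η = TV(P₀,P₁)/(1+TV(P₀,P₁)) ≥ ε`, `G₀,G₁` such that
`(1-η)P₀ + ηG₀ = (1-η)P₁ + ηG₁`, and `M_j = (1-ε)P_j + εG_j`, we have
`TV(M₀,M₁) = (1-ε){TV(P₀,P₁) - ε/(1-ε)} ≤ TV(P₀,P₁) - ε/(1-ε)`. -/
theorem tv_contaminated_pair {X : Type*} [MeasurableSpace X]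
    (P₀ P₁ G₀ G₁ : Measure X)
    [IsProbabilityMeasure P₀] [IsProbabilityMeasure P₁]
    [IsProbabilityMeasure G₀] [IsProbabilityMeasure G₁]
    (ε : ℝ) (hε0 : 0 ≤ ε) (hε1 : ε < 1)
    (η : ℝ) (hη : η = tv P₀ P₁ / (1 + tv P₀ P₁)) (hεη : ε ≤ η)
    (hcouple : mix η P₀ G₀ = mix η P₁ G₁) :
    tv (mix ε P₀ G₀) (mix ε P₁ G₁) = (1 - ε) * (tv P₀ P₁ - ε / (1 - ε)) ∧
      tv (mix ε P₀ G₀) (mix ε P₁ G₁) ≤ tv P₀ P₁ - ε / (1 - ε) := by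
  set t := tv P₀ P₁ with ht
  have ht0 : 0 ≤ t := tv_nonneg P₀ P₁
  have h1t : (0:ℝ) < 1 + t := by linarith
  have hη0 : 0 ≤ η := by rw [hη]; positivity
  have hη1 : η < 1 := by rw [hη]; rw [div_lt_one h1t]; linarith
  by_cases htz : t = 0
  · -- then η = 0, ε = 0, mix is identity
    have hηz : η = 0 := by rw [hη, htz]; simp
    have hεz : ε = 0 := le_antisymm (hηz ▸ hεη) hε0
    have hmix : ∀ (P G : Measure X), mix (0:ℝ) P G = P := by
      intro P G
      simp [mix]
    rw [hεz, hmix, hmix, ← ht, htz]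
    norm_num
  · have htpos : 0 < t := lt_of_le_of_ne ht0 (Ne.symm htz)
    have hηpos : 0 < η := by rw [hη]; positivity
    set c : ℝ := (η - ε) / η with hc
    have hc0 : 0 ≤ c := div_nonneg (by linarith) (le_of_lt hηpos)
    -- pointwise identity
    have key : ∀ S : Set X, MeasurableSet S →
        ((mix ε P₀ G₀) S).toReal - ((mix ε P₁ G₁) S).toReal
          = c * ((P₀ S).toReal - (P₁ S).toReal) := by
      intro S hS
      have hcS : ((mix η P₀ G₀) S).toReal = ((mix η P₁ G₁) S).toReal := by rw [hcouple]
      rw [mix_apply_toReal η hη0 hη1.le, mix_apply_toReal η hη0 hη1.le] at hcS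
      rw [mix_apply_toReal ε hε0 hε1.le, mix_apply_toReal ε hε0 hε1.le]
      set p₀ := (P₀ S).toReal
      set p₁ := (P₁ S).toReal
      set g₀ := (G₀ S).toReal
      set g₁ := (G₁ S).toReal
      have hgg : g₀ - g₁ = (1 - η) / η * (p₁ - p₀) := by
        field_simp
        linarith
      rw [hc]
      field_simp
      nlinarith [hgg, hηpos]
    -- tv equality
    have htv : tv (mix ε P₀ G₀) (mix ε P₁ G₁) = c * t := by
      rw [ht]
      unfold tv
      rw [Real.mul_iSup_of_nonneg hc0]
      congr 1
      funext S
      rw [key S.1 S.2, abs_mul, abs_of_nonneg hc0]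
    have hct : c * t = (1 - ε) * (t - ε / (1 - ε)) := by
      have hηt : η = t / (1 + t) := hη
      have h1ε : (0:ℝ) < 1 - ε := by linarith
      rw [hc, hηt]
      field_simp
      ring
    refine ⟨by rw [htv, hct], ?_⟩
    rw [htv, hct]
    have h1ε : (0:ℝ) < 1 - ε := by linarith
    have hnn : 0 ≤ t - ε / (1 - ε) := by
      have : 0 ≤ c * t := mul_nonneg hc0 ht0
      nlinarith [hct]
    nlinarith
end

section
/- In the setting of the privatised Scheffé test: assume $\mathrm{TV}(P_0, P_1) > 2\varepsilon$, $\alpha \in (0,1)$, and $\mathrm{TV}(P, P_0) \leq \varepsilon$. Then the test $\tilde{\phi} = \mathbbm{1}\{2\widetilde{N}_0/n < P_0(A) + P_1(A)\}$ satisfies $\mathbb{E}_{P,Q}[\tilde{\phi}] \leq \exp\{-C \alpha^2 n (\mathrm{TV}(P_0,P_1) - 2\varepsilon)^2\}$ for some absolute constant $C > 0$. -/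
open MeasureTheory ENNReal ProbabilityTheory
open scoped Classical

lemma exp_neg_le_quad {t : ℝ} (ht : 0 ≤ t) : Real.exp (-t) ≤ 1 - t + t ^ 2 / 2 := by
  set f : ℝ → ℝ := fun x => 1 - x + x ^ 2 / 2 - Real.exp (-x) with hf
  have hderiv : ∀ x : ℝ, HasDerivAt f (-1 + x + Real.exp (-x)) x := by
    intro x
    have h1 : HasDerivAt (fun x : ℝ => Real.exp (-x)) (-Real.exp (-x)) x := by
      exact ((Real.hasDerivAt_exp (-x)).comp x (hasDerivAt_neg x)).congr_deriv (by ring)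
    have h2 : HasDerivAt (fun x : ℝ => 1 - x + x ^ 2 / 2) (-1 + x) x := by
      have := ((hasDerivAt_const x (1:ℝ)).sub (hasDerivAt_id x)).add
        ((hasDerivAt_pow 2 x).div_const 2)
      exact this.congr_deriv (by norm_num)
    rw [hf]; exact (h2.sub h1).congr_deriv (by ring)
  have hmono : MonotoneOn f (Set.Ici (0:ℝ)) := by
    refine monotoneOn_of_deriv_nonneg (convex_Ici 0)
      (fun x _ => (hderiv x).continuousAt.continuousWithinAt)
      (fun x _ => ((hderiv x).differentiableAt).differentiableWithinAt) ?_
    intro x hx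
    rw [(hderiv x).deriv]
    have := Real.add_one_le_exp (-x)
    linarith
  have h0 : f 0 = 0 := by simp [hf]
  have := hmono (Set.self_mem_Ici) (Set.mem_Ici.mpr ht) ht
  rw [h0] at this
  simp only [hf] at this
  linarith

lemma bern_mgf {Ω : Type*} [MeasurableSpace Ω] (μ : Measure Ω) [IsProbabilityMeasure μ]
    (Z : Ω → ℝ) (hmeas : Measurable Z) (h01 : ∀ ω, Z ω = 0 ∨ Z ω = 1) {q t : ℝ}
    (hq : ∫ ω, Z ω ∂μ = q) (ht : 0 ≤ t) :
    mgf (fun ω => q - Z ω) μ t ≤ Real.exp (t ^ 2 / 2) := by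
  have hZint : Integrable Z μ := by
    refine (integrable_const (1:ℝ)).mono' hmeas.aestronglyMeasurable (ae_of_all _ fun ω => ?_)
    rcases h01 ω with h | h <;> simp [h]
  have hq0 : 0 ≤ q := by
    rw [← hq]
    refine integral_nonneg fun ω => ?_
    rcases h01 ω with h | h <;> simp [h]
  have hq1 : q ≤ 1 := by
    rw [← hq]
    calc ∫ ω, Z ω ∂μ ≤ ∫ _, (1:ℝ) ∂μ := by
          refine integral_mono hZint (integrable_const 1) fun ω => ?_
          rcases h01 ω with h | h <;> simp [h]
      _ = 1 := by simp
  have hpt : ∀ ω, Real.exp (t * (q - Z ω))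
      = Real.exp (t * q) * (1 + (Real.exp (-t) - 1) * Z ω) := by
    intro ω
    rcases h01 ω with h | h
    · simp [h]
    · rw [h]
      have : (1:ℝ) + (Real.exp (-t) - 1) * 1 = Real.exp (-t) := by ring
      rw [this, ← Real.exp_add]
      ring_nf
  have hmgf : mgf (fun ω => q - Z ω) μ t
      = Real.exp (t * q) * (1 + (Real.exp (-t) - 1) * q) := by
    rw [mgf]
    simp only [hpt]
    rw [integral_const_mul, integral_add (integrable_const 1) (hZint.const_mul _),
      integral_const_mul, hq]
    simp
  rw [hmgf]
  have h1 : 1 + (Real.exp (-t) - 1) * q ≤ Real.exp ((Real.exp (-t) - 1) * q) := by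
    have := Real.add_one_le_exp ((Real.exp (-t) - 1) * q)
    linarith
  calc Real.exp (t * q) * (1 + (Real.exp (-t) - 1) * q)
      ≤ Real.exp (t * q) * Real.exp ((Real.exp (-t) - 1) * q) :=
        mul_le_mul_of_nonneg_left h1 (Real.exp_pos _).le
    _ = Real.exp (q * (t + Real.exp (-t) - 1)) := by rw [← Real.exp_add]; ring_nf
    _ ≤ Real.exp (t ^ 2 / 2) := by
        apply Real.exp_le_exp.mpr
        have hA : 0 ≤ t + Real.exp (-t) - 1 := by
          have := Real.add_one_le_exp (-t); linarith
        have hB : t + Real.exp (-t) - 1 ≤ t ^ 2 / 2 := by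
          have := exp_neg_le_quad ht; linarith
        nlinarith

lemma prob_toReal_le_one {X : Type*} [MeasurableSpace X] (μ : Measure X)
    [IsProbabilityMeasure μ] (S : Set X) : (μ S).toReal ≤ 1 := by
  have h := prob_le_one (μ := μ) (s := S)
  have := (ENNReal.toReal_le_toReal (measure_ne_top μ S) one_ne_top).mpr h
  simpa using this

lemma abs_sub_le_tv {X : Type*} [MeasurableSpace X] (P Q : Measure X)
    [IsProbabilityMeasure P] [IsProbabilityMeasure Q] {S : Set X} (hS : MeasurableSet S) :
    |(P S).toReal - (Q S).toReal| ≤ tv P Q := by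
  have hbdd : BddAbove (Set.range fun S : {S : Set X // MeasurableSet S} =>
      |(P S.1).toReal - (Q S.1).toReal|) := by
    refine ⟨2, ?_⟩
    rintro x ⟨T, rfl⟩
    have h1 := prob_toReal_le_one P T.1
    have h2 := prob_toReal_le_one Q T.1
    have h3 : (0:ℝ) ≤ (P T.1).toReal := ENNReal.toReal_nonneg
    have h4 : (0:ℝ) ≤ (Q T.1).toReal := ENNReal.toReal_nonneg
    rw [abs_le]; constructor <;> linarith
  exact le_ciSup hbdd ⟨S, hS⟩

set_option maxHeartbeats 1000000 in
/-- Type I error bound for the privatised Scheffé test: if `TV(P₀,P₁) > 2ε`, `α ∈ (0,1)`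
and `TV(P,P₀) ≤ ε`, then the test `φ̃ = 1{2Ñ₀/n < P₀(A)+P₁(A)}` based on the
randomised-response counts satisfies
`E_{P,Q}[φ̃] ≤ exp{-C α² n (TV(P₀,P₁) - 2ε)²}` for an absolute constant `C > 0`. -/
theorem scheffe_test_type_one_error :
    ∃ C : ℝ, 0 < C ∧
      ∀ (𝒳 Ω : Type) [MeasurableSpace 𝒳] [MeasurableSpace Ω]
        (μ : Measure Ω) [IsProbabilityMeasure μ]
        (P P₀ P₁ : Measure 𝒳) [IsProbabilityMeasure P]
        [IsProbabilityMeasure P₀] [IsProbabilityMeasure P₁]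
        (A : Set 𝒳) (_ : MeasurableSet A)
        (_ : ∀ S : Set 𝒳, MeasurableSet S →
          (P₀ S).toReal - (P₁ S).toReal ≤ (P₀ A).toReal - (P₁ A).toReal)
        (_ : (P₀ A).toReal - (P₁ A).toReal = tv P₀ P₁)
        (n : ℕ) (_ : 0 < n) (α ε : ℝ) (_ : 0 < α) (_ : α < 1) (_ : 0 ≤ ε)
        (_ : 2 * ε < tv P₀ P₁) (_ : tv P P₀ ≤ ε)
        (XU : Fin n → Ω → 𝒳 × ℝ)
        (_ : ∀ i, Measurable (XU i))
        (_ : ∀ i, Measure.map (XU i) μ = P.prod (volume.restrict (Set.Icc (0:ℝ) 1)))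
        (_ : iIndepFun XU μ),
        (μ {ω | 2 * ((Real.exp α + 1) / (Real.exp α - 1) *
              ((∑ i : Fin n,
                  (if (if (XU i ω).2 ≤ Real.exp α / (1 + Real.exp α)
                        then (if (XU i ω).1 ∈ Aᶜ then (1:ℝ) else 0)
                        else 1 - (if (XU i ω).1 ∈ Aᶜ then (1:ℝ) else 0)) = 0
                    then (1:ℝ) else 0))
                - n / (Real.exp α + 1))) / n
            < (P₀ A).toReal + (P₁ A).toReal}).toReal
          ≤ Real.exp (-C * α ^ 2 * n * (tv P₀ P₁ - 2 * ε) ^ 2) := by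
  refine ⟨1/128, by norm_num, ?_⟩
  intro 𝒳 Ω mX mΩ μ hμ P P₀ P₁ hP hP0 hP1 A hA hSch htvA n hn α ε hα0 hα1 hε h2ε htvP
    XU hXU hmap hIndep
  have hn' : (0:ℝ) < n := Nat.cast_pos.mpr hn
  set E := Real.exp α with hE
  have hE1 : 1 < E := by have := Real.add_one_le_exp α; linarith
  have hE3 : E < 3 := by
    have h1 : E < Real.exp 1 := by rw [hE]; exact Real.exp_lt_exp.mpr hα1
    have := Real.exp_one_lt_d9; linarith
  set p : ℝ := E / (1 + E) with hpdef
  have hp0 : 0 < p := div_pos (by linarith) (by linarith)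
  have hp1 : p < 1 := by rw [hpdef, div_lt_one (by linarith)]; linarith
  set ν := volume.restrict (Set.Icc (0:ℝ) 1) with hν
  set B : Set (𝒳 × ℝ) := (A ×ˢ Set.Iic p) ∪ (Aᶜ ×ˢ (Set.Iic p)ᶜ) with hBdef
  have hMB : MeasurableSet B :=
    (hA.prod measurableSet_Iic).union (hA.compl.prod measurableSet_Iic.compl)
  set g : 𝒳 × ℝ → ℝ := B.indicator (fun _ => 1) with hgdef
  have hgm : Measurable g := measurable_const.indicator hMB
  have hgval : ∀ v : 𝒳 × ℝ,
      (if (if v.2 ≤ p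
            then (if v.1 ∈ Aᶜ then (1:ℝ) else 0)
            else 1 - (if v.1 ∈ Aᶜ then (1:ℝ) else 0)) = 0
        then (1:ℝ) else 0) = g v := by
    intro v
    by_cases h1 : v.2 ≤ p <;> by_cases h2 : v.1 ∈ A
    · have hvB : v ∈ B := Set.mem_union_left _ ⟨h2, h1⟩
      norm_num [hgdef, Set.indicator_of_mem hvB, Set.mem_compl_iff, h1, h2]
    · have hvB : v ∉ B := by
        rintro (⟨hvA, -⟩ | ⟨-, hvp⟩)
        · exact h2 hvA
        · exact hvp h1
      norm_num [hgdef, Set.indicator_of_notMem hvB, Set.mem_compl_iff, h1, h2]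
    · have hvB : v ∉ B := by
        rintro (⟨-, hvp⟩ | ⟨hvA, -⟩)
        · exact h1 hvp
        · exact hvA h2
      norm_num [hgdef, Set.indicator_of_notMem hvB, Set.mem_compl_iff, h1, h2]
    · have hvB : v ∈ B := Set.mem_union_right _ ⟨h2, fun hc => h1 hc⟩
      norm_num [hgdef, Set.indicator_of_mem hvB, Set.mem_compl_iff, h1, h2]
  have hZ01 : ∀ (i : Fin n) (ω : Ω), g (XU i ω) = 0 ∨ g (XU i ω) = 1 := by
    intro i ω
    by_cases h : XU i ω ∈ B <;> simp [hgdef, Set.indicator_apply, h]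
  set a := (P A).toReal with ha
  have ha0 : (0:ℝ) ≤ a := ENNReal.toReal_nonneg
  have ha1 : a ≤ 1 := prob_toReal_le_one P A
  have hν1 : ν (Set.Iic p) = ENNReal.ofReal p := by
    rw [hν, Measure.restrict_apply measurableSet_Iic]
    have heq : Set.Iic p ∩ Set.Icc (0:ℝ) 1 = Set.Icc 0 p := by
      ext x
      simp only [Set.mem_inter_iff, Set.mem_Iic, Set.mem_Icc]
      constructor
      · rintro ⟨u1, u2, u3⟩; exact ⟨u2, u1⟩
      · rintro ⟨u1, u2⟩; exact ⟨u2, u1, le_trans u2 hp1.le⟩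
    rw [heq, Real.volume_Icc]
    simp
  have hν2 : ν ((Set.Iic p)ᶜ) = ENNReal.ofReal (1 - p) := by
    rw [hν, Measure.restrict_apply measurableSet_Iic.compl, Set.compl_Iic]
    have heq : Set.Ioi p ∩ Set.Icc (0:ℝ) 1 = Set.Ioc p 1 := by
      ext x
      simp only [Set.mem_inter_iff, Set.mem_Ioi, Set.mem_Icc, Set.mem_Ioc]
      constructor
      · rintro ⟨u1, u2, u3⟩; exact ⟨u1, u3⟩
      · rintro ⟨u1, u2⟩; exact ⟨u1, le_trans hp0.le u1.le, u2⟩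
    rw [heq, Real.volume_Ioc]
  set q : ℝ := a * p + (1 - a) * (1 - p) with hqdef
  have hq0 : 0 ≤ q := by rw [hqdef]; nlinarith
  have hq1 : q ≤ 1 := by rw [hqdef]; nlinarith
  have hEZ : ∀ i : Fin n, ∫ ω, g (XU i ω) ∂μ = q := by
    intro i
    rw [← integral_map (hXU i).aemeasurable hgm.aestronglyMeasurable, hmap i]
    have h1 : ∫ v, g v ∂(P.prod ν) = ((P.prod ν) B).toReal := by
      rw [hgdef]
      exact integral_indicator_one hMB
    rw [h1]
    have hdisj : Disjoint (A ×ˢ Set.Iic p) (Aᶜ ×ˢ (Set.Iic p)ᶜ) :=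
      Set.disjoint_left.mpr fun v hv hv' => hv'.1 hv.1
    have hcompl : (P Aᶜ).toReal = 1 - a := by
      rw [measure_compl hA (measure_ne_top P A), measure_univ,
        ENNReal.toReal_sub_of_le prob_le_one one_ne_top]
      simp [ha]
    rw [hBdef, measure_union hdisj (hA.compl.prod measurableSet_Iic.compl),
      Measure.prod_prod, Measure.prod_prod, hν1, hν2,
      ENNReal.toReal_add (ENNReal.mul_ne_top (measure_ne_top _ _) ENNReal.ofReal_ne_top)
        (ENNReal.mul_ne_top (measure_ne_top _ _) ENNReal.ofReal_ne_top),
      ENNReal.toReal_mul, ENNReal.toReal_mul, ENNReal.toReal_ofReal hp0.le,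
      ENNReal.toReal_ofReal (by linarith : (0:ℝ) ≤ 1 - p), hcompl, ← ha, hqdef]
  have haP0 : |a - (P₀ A).toReal| ≤ ε := le_trans (abs_sub_le_tv P P₀ hA) htvP
  set t₀ : ℝ := tv P₀ P₁ - 2 * ε with ht₀def
  have ht₀pos : 0 < t₀ := by rw [ht₀def]; linarith
  set c' : ℝ := (E - 1) / (E + 1) with hc'
  have hc'pos : 0 < c' := div_pos (by linarith) (by linarith)
  have hc'α : α / 4 ≤ c' := by
    rw [hc', div_le_div_iff₀ (by norm_num) (by linarith)]
    have hαE : α ≤ E - 1 := by have := Real.add_one_le_exp α; linarith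
    nlinarith
  have htopt : 0 < c' * t₀ / 2 := by positivity
  have hEne1 : E - 1 ≠ 0 := by linarith
  have hEne2 : E + 1 ≠ 0 := by linarith
  have hEne3 : 1 + E ≠ 0 := by linarith
  have hqlin : q = 1 / (E + 1) + c' * a := by
    rw [hqdef, hpdef, hc']
    field_simp
    ring
  -- measurability and independence of the Y's
  have hYmeas : ∀ i : Fin n, Measurable fun ω => q - g (XU i ω) := fun i =>
    measurable_const.sub (hgm.comp (hXU i))
  have hIndepY : iIndepFun
      (fun i : Fin n => fun ω => q - g (XU i ω)) μ := by
    have := hIndep.comp (fun _ v => q - g v) fun _ => measurable_const.sub hgm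
    exact this
  -- integrability
  have hint_i : ∀ i : Fin n,
      Integrable (fun ω => Real.exp (c' * t₀ / 2 * (q - g (XU i ω)))) μ := by
    intro i
    refine (integrable_const (Real.exp (c' * t₀ / 2))).mono'
      (((hYmeas i).const_mul _).exp).aestronglyMeasurable (ae_of_all _ fun ω => ?_)
    rw [Real.norm_eq_abs, abs_of_pos (Real.exp_pos _)]
    apply Real.exp_le_exp.mpr
    have hg0 : 0 ≤ g (XU i ω) := by rcases hZ01 i ω with h | h <;> simp [h]
    nlinarith [htopt.le]
  have hXint : Integrable
      (fun ω => Real.exp (c' * t₀ / 2 * (∑ i : Fin n, fun ω => q - g (XU i ω)) ω)) μ :=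
    hIndepY.integrable_exp_mul_sum hYmeas fun i _ => hint_i i
  -- Chernoff bound
  have hchern := measure_ge_le_exp_mul_mgf (μ := μ)
    (X := ∑ i : Fin n, fun ω => q - g (XU i ω)) (t := c' * t₀ / 2)
    (↑n * (c' * t₀ / 2)) htopt.le hXint
  -- per-coordinate mgf bound
  have hmgf_i : ∀ i : Fin n,
      mgf (fun ω => q - g (XU i ω)) μ (c' * t₀ / 2) ≤ Real.exp ((c' * t₀ / 2) ^ 2 / 2) :=
    fun i => bern_mgf μ (fun ω => g (XU i ω)) (hgm.comp (hXU i)) (hZ01 i) (hEZ i) htopt.le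
  have hmgfle : mgf (∑ i : Fin n, fun ω => q - g (XU i ω)) μ (c' * t₀ / 2)
      ≤ Real.exp (↑n * ((c' * t₀ / 2) ^ 2 / 2)) := by
    calc mgf (∑ i : Fin n, fun ω => q - g (XU i ω)) μ (c' * t₀ / 2)
        = ∏ i : Fin n, mgf (fun ω => q - g (XU i ω)) μ (c' * t₀ / 2) :=
          hIndepY.mgf_sum hYmeas Finset.univ
      _ ≤ ∏ _i : Fin n, Real.exp ((c' * t₀ / 2) ^ 2 / 2) :=
          Finset.prod_le_prod (fun i _ => mgf_nonneg) fun i _ => hmgf_i i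
      _ = Real.exp (↑n * ((c' * t₀ / 2) ^ 2 / 2)) := by
          rw [Finset.prod_const, Finset.card_univ, Fintype.card_fin, ← Real.exp_nat_mul]
  -- tail bound for the deviation event
  have htail : (μ {ω | ↑n * (c' * t₀ / 2)
        ≤ (∑ i : Fin n, fun ω => q - g (XU i ω)) ω}).toReal
      ≤ Real.exp (-(1/128) * α ^ 2 * ↑n * (tv P₀ P₁ - 2 * ε) ^ 2) := by
    refine le_trans hchern ?_
    refine le_trans (mul_le_mul_of_nonneg_left hmgfle (Real.exp_pos _).le) ?_
    rw [← Real.exp_add]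
    apply Real.exp_le_exp.mpr
    rw [← ht₀def]
    have hc'sq : α ^ 2 / 16 ≤ c' ^ 2 := by nlinarith [hc'α, hα0.le, hc'pos.le]
    nlinarith [mul_le_mul_of_nonneg_left hc'sq
      (show (0:ℝ) ≤ ↑n * t₀ ^ 2 / 8 by positivity)]
  refine le_trans (ENNReal.toReal_mono (measure_ne_top _ _) (measure_mono ?_)) htail
  intro ω hω
  simp only [Set.mem_setOf_eq] at hω ⊢
  simp only [hgval] at hω
  rw [Finset.sum_apply]
  rw [Finset.sum_sub_distrib, Finset.sum_const, Finset.card_univ, Fintype.card_fin,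
    nsmul_eq_mul]
  set T := ∑ i : Fin n, g (XU i ω) with hT
  have h1 : (E + 1) / (E - 1) * (T - ↑n / (E + 1))
      < ((P₀ A).toReal + (P₁ A).toReal) * ↑n / 2 := by
    rw [div_lt_iff₀ hn'] at hω
    linarith
  have h4 : c' * ((E + 1) / (E - 1) * (T - ↑n / (E + 1))) = T - ↑n / (E + 1) := by
    rw [hc']
    field_simp
  have h2 : T - ↑n / (E + 1) < c' * (((P₀ A).toReal + (P₁ A).toReal) * ↑n / 2) := by
    have h3 := mul_lt_mul_of_pos_left h1 hc'pos
    rw [h4] at h3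
    exact h3
  have h5 : t₀ / 2 ≤ a - ((P₀ A).toReal + (P₁ A).toReal) / 2 := by
    have h6 := abs_le.mp haP0
    rw [ht₀def, ← htvA]
    linarith [h6.1, h6.2]
  have hnq : (↑n : ℝ) * q = ↑n / (E + 1) + ↑n * (c' * a) := by
    rw [hqlin]; ring
  have h7 : ↑n * c' * (t₀ / 2) ≤ ↑n * c' * (a - ((P₀ A).toReal + (P₁ A).toReal) / 2) :=
    mul_le_mul_of_nonneg_left h5 (by positivity)
  nlinarith [h2, h7, hnq]
end

section
/- Let $\mathcal{P}_k = \{P : \mathbb{E}_P(X) \in [-D,D],\; \mathbb{E}_P|X - \mathbb{E}_P X|^k \leq 1\}$ for fixed $k > 1$ and $D \geq 1$. For every $\eta \in (0,1)$ there exist $R_0, R_1 \in \mathcal{P}_k$ with $\mathrm{TV}(R_0, R_1) = \eta$ and $|\mathbb{E}_{R_1}(X) - \mathbb{E}_{R_0}(X)| = 2^{-1/k}\eta^{1-1/k}$. Consequently, the total variation modulus of continuity of the mean over $\mathcal{P}_k$ satisfies $\omega'(\eta) \geq 2^{-1/k}\eta^{1-1/k}$. -/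
open MeasureTheory ENNReal

/-- The mean of a distribution on `ℝ`. -/
noncomputable def meanOf (P : Measure ℝ) : ℝ := ∫ x, x ∂P

/-- The class `𝒫_k` of probability distributions on `ℝ` with mean in `[-D, D]` and
`k`-th central moment at most `1`. -/
def momentClass (k D : ℝ) : Set (Measure ℝ) :=
  {P | IsProbabilityMeasure P ∧ Integrable (fun x => x) P ∧
    meanOf P ∈ Set.Icc (-D) D ∧ (∫ x, |x - meanOf P| ^ k ∂P) ≤ 1}

private lemma integrable_dirac' {f : ℝ → ℝ} (a : ℝ) :
    Integrable f (Measure.dirac a) :=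
  (integrable_const (f a)).congr (MeasureTheory.ae_eq_dirac f).symm

/-- For every `η ∈ (0,1)` there are `R₀, R₁ ∈ 𝒫_k` with `TV(R₀,R₁) = η` and mean
difference `2^{-1/k} η^{1-1/k}`; consequently the TV modulus of continuity of the mean
over `𝒫_k` satisfies `ω'(η) ≥ 2^{-1/k} η^{1-1/k}`. -/
theorem mean_modulus_lower_bound (k D η : ℝ) (hk : 1 < k) (hD : 1 ≤ D)
    (hη0 : 0 < η) (hη1 : η < 1) :
    (∃ R₀ R₁ : Measure ℝ, R₀ ∈ momentClass k D ∧ R₁ ∈ momentClass k D ∧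
      tv R₀ R₁ = η ∧
      |meanOf R₁ - meanOf R₀| = (2:ℝ) ^ (-(1/k)) * η ^ (1 - 1/k)) ∧
    (2:ℝ) ^ (-(1/k)) * η ^ (1 - 1/k) ≤
      sSup {d : ℝ | ∃ R₀ R₁ : Measure ℝ, R₀ ∈ momentClass k D ∧ R₁ ∈ momentClass k D ∧
        tv R₀ R₁ ≤ η ∧ d = |meanOf R₀ - meanOf R₁|} := by
  classical
  have hk0 : (0:ℝ) < k := by linarith
  have h2η : (0:ℝ) < 2 * η := by linarith
  have h1η : (0:ℝ) ≤ 1 - η := by linarith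
  set a : ℝ := D - 1 with ha_def
  set c : ℝ := (2*η) ^ (-(1/k)) with hc_def
  have hc0 : 0 < c := Real.rpow_pos_of_pos h2η _
  set b : ℝ := a + c with hb_def
  have hab : a ≠ b := by rw [hb_def]; intro h; nlinarith
  set R₀ : Measure ℝ := Measure.dirac a with hR0_def
  set R₁ : Measure ℝ :=
    (ENNReal.ofReal (1-η)) • Measure.dirac a + (ENNReal.ofReal η) • Measure.dirac b with hR1_def
  -- measure evaluations
  have happly0 : ∀ S : Set ℝ, (R₀ S).toReal = (if a ∈ S then (1:ℝ) else 0) := by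
    intro S
    by_cases hA : a ∈ S <;>
      simp [hR0_def, Measure.dirac_apply, Set.indicator_apply, hA]
  have hindlt : ∀ (S : Set ℝ) (x : ℝ), S.indicator (1 : ℝ → ℝ≥0∞) x ≠ ∞ := by
    intro S x; by_cases h : x ∈ S <;> simp [h]
  have hind : ∀ (S : Set ℝ) (x : ℝ),
      (S.indicator (1 : ℝ → ℝ≥0∞) x).toReal = if x ∈ S then (1:ℝ) else 0 := by
    intro S x; by_cases h : x ∈ S <;> simp [h]
  have happly1 : ∀ S : Set ℝ,
      (R₁ S).toReal = (1-η) * (if a ∈ S then (1:ℝ) else 0) + η * (if b ∈ S then 1 else 0) := by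
    intro S
    rw [hR1_def, Measure.add_apply, Measure.smul_apply, Measure.smul_apply,
      Measure.dirac_apply, Measure.dirac_apply, smul_eq_mul, smul_eq_mul,
      ENNReal.toReal_add (ENNReal.mul_ne_top ofReal_ne_top (hindlt S a))
        (ENNReal.mul_ne_top ofReal_ne_top (hindlt S b)),
      ENNReal.toReal_mul, ENNReal.toReal_mul, ENNReal.toReal_ofReal h1η,
      ENNReal.toReal_ofReal hη0.le, hind, hind]
  -- probability measures
  have hprob0 : IsProbabilityMeasure R₀ := by rw [hR0_def]; infer_instance
  have hprob1 : IsProbabilityMeasure R₁ := by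
    constructor
    rw [hR1_def, Measure.add_apply, Measure.smul_apply, Measure.smul_apply,
      measure_univ, measure_univ, smul_eq_mul, smul_eq_mul, mul_one, mul_one,
      ← ENNReal.ofReal_add h1η hη0.le]
    norm_num
  -- integrability
  have hintx0 : Integrable (fun x => x) R₀ := integrable_dirac' a
  have hintxa : Integrable (fun x : ℝ => x) ((ENNReal.ofReal (1-η)) • Measure.dirac a) :=
    (integrable_dirac' a).smul_measure ofReal_ne_top
  have hintxb : Integrable (fun x : ℝ => x) ((ENNReal.ofReal η) • Measure.dirac b) :=
    (integrable_dirac' b).smul_measure ofReal_ne_top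
  have hintx1 : Integrable (fun x => x) R₁ := by
    rw [hR1_def]; exact hintxa.add_measure hintxb
  -- means
  have hmean0 : meanOf R₀ = a := by rw [hR0_def, meanOf, integral_dirac]
  have hmean1 : meanOf R₁ = a + η * c := by
    rw [hR1_def, meanOf, integral_add_measure hintxa hintxb, integral_smul_measure,
      integral_smul_measure, integral_dirac, integral_dirac,
      ENNReal.toReal_ofReal h1η, ENNReal.toReal_ofReal hη0.le, smul_eq_mul, smul_eq_mul,
      hb_def]
    ring
  -- key arithmetic
  have hkey : η * c = (2:ℝ) ^ (-(1/k)) * η ^ (1 - 1/k) := by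
    rw [hc_def, Real.mul_rpow (by norm_num : (0:ℝ) ≤ 2) hη0.le,
      show (1:ℝ) - 1/k = 1 + (-(1/k)) by ring, Real.rpow_add hη0, Real.rpow_one]
    ring
  have hexp_pos : 0 < 1 - 1/k := by
    have : 1/k < 1 := by rw [div_lt_one hk0]; exact hk
    linarith
  have hηc_le1 : η * c ≤ 1 := by
    rw [hkey]
    have hik : (0:ℝ) < 1/k := by positivity
    have h1 : (2:ℝ) ^ (-(1/k)) ≤ 1 :=
      Real.rpow_le_one_of_one_le_of_nonpos (by norm_num) (by linarith)
    have h2 : η ^ (1 - 1/k) ≤ 1 := Real.rpow_le_one hη0.le hη1.le hexp_pos.le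
    have h3 : (0:ℝ) ≤ η ^ (1 - 1/k) := Real.rpow_nonneg hη0.le _
    nlinarith
  have hηc_pos : 0 < η * c := by positivity
  -- means in Icc
  have hIcc0 : meanOf R₀ ∈ Set.Icc (-D) D := by
    rw [hmean0, ha_def]; constructor <;> [linarith; linarith]
  have hIcc1 : meanOf R₁ ∈ Set.Icc (-D) D := by
    rw [hmean1, ha_def]; constructor <;> [linarith; linarith]
  -- moment of R₀
  have hmom0 : (∫ x, |x - meanOf R₀| ^ k ∂ R₀) ≤ 1 := by
    rw [hR0_def, integral_dirac, hmean0, sub_self, abs_zero, Real.zero_rpow hk0.ne']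
    norm_num
  -- moment of R₁
  have hmom1 : (∫ x, |x - meanOf R₁| ^ k ∂ R₁) ≤ 1 := by
    have hintma : Integrable (fun x : ℝ => |x - meanOf R₁| ^ k)
        ((ENNReal.ofReal (1-η)) • Measure.dirac a) :=
      (integrable_dirac' a).smul_measure ofReal_ne_top
    have hintmb : Integrable (fun x : ℝ => |x - meanOf R₁| ^ k)
        ((ENNReal.ofReal η) • Measure.dirac b) :=
      (integrable_dirac' b).smul_measure ofReal_ne_top
    have hval : (∫ x, |x - meanOf R₁| ^ k ∂ R₁)
        = (1-η) * |a - meanOf R₁| ^ k + η * |b - meanOf R₁| ^ k := by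
      rw [hR1_def, integral_add_measure hintma hintmb, integral_smul_measure,
        integral_smul_measure, integral_dirac, integral_dirac,
        ENNReal.toReal_ofReal h1η, ENNReal.toReal_ofReal hη0.le, smul_eq_mul, smul_eq_mul]
    have ham : |a - meanOf R₁| = η * c := by
      rw [hmean1, abs_of_nonpos (by linarith)]; ring
    have hbm : |b - meanOf R₁| = (1-η) * c := by
      rw [hmean1, hb_def, abs_of_nonneg (by nlinarith)]; ring
    have hck : c ^ k = (2*η)⁻¹ := by
      rw [hc_def, ← Real.rpow_mul h2η.le,
        show -(1/k) * k = -1 by field_simp, Real.rpow_neg_one]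
    have hkm1 : η ^ k = η ^ (k-1) * η := by
      rw [show k = (k-1) + 1 by ring, Real.rpow_add hη0, Real.rpow_one]
      ring_nf
    have hηk1_le : η ^ (k-1) ≤ 1 := Real.rpow_le_one hη0.le hη1.le (by linarith)
    have hηk1_nn : (0:ℝ) ≤ η ^ (k-1) := Real.rpow_nonneg hη0.le _
    have h1ηk_le : (1-η) ^ k ≤ 1 := Real.rpow_le_one h1η (by linarith) hk0.le
    have h1ηk_nn : (0:ℝ) ≤ (1-η) ^ k := Real.rpow_nonneg h1η _
    rw [hval, ham, hbm, Real.mul_rpow hη0.le hc0.le, Real.mul_rpow h1η hc0.le, hck, hkm1]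
    have hrepr : (1-η) * (η ^ (k-1) * η * (2*η)⁻¹) + η * ((1-η) ^ k * (2*η)⁻¹)
        = ((1-η) * η ^ (k-1) + (1-η) ^ k) / 2 := by
      field_simp
    rw [hrepr]
    nlinarith
  -- memberships
  have hmem0 : R₀ ∈ momentClass k D := ⟨hprob0, hintx0, hIcc0, hmom0⟩
  have hmem1 : R₁ ∈ momentClass k D := ⟨hprob1, hintx1, hIcc1, hmom1⟩
  -- tv bound
  have hboundS : ∀ S : Set ℝ, |(R₀ S).toReal - (R₁ S).toReal| ≤ η := by
    intro S
    rw [happly0 S, happly1 S]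
    by_cases hA : a ∈ S <;> by_cases hB : b ∈ S <;>
      simp only [hA, hB, if_true, if_false, mul_one, mul_zero, add_zero, zero_add]
    · rw [show (1:ℝ) - ((1-η) + η) = 0 by ring, abs_zero]; linarith
    · rw [show (1:ℝ) - (1-η) = η by ring, abs_of_pos hη0]
    · rw [zero_sub, abs_neg, abs_of_pos hη0]
    · rw [sub_self, abs_zero]; linarith
  have htv : tv R₀ R₁ = η := by
    have hBdd : BddAbove (Set.range fun S : {S : Set ℝ // MeasurableSet S} =>
        |(R₀ S.1).toReal - (R₁ S.1).toReal|) := by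
      refine ⟨η, ?_⟩
      rintro x ⟨S, rfl⟩
      exact hboundS S.1
    have hvalb : |(R₀ ({b} : Set ℝ)).toReal - (R₁ ({b} : Set ℝ)).toReal| = η := by
      rw [happly0, happly1, if_neg (show a ∉ ({b} : Set ℝ) by simpa using hab),
        if_pos (show b ∈ ({b} : Set ℝ) from rfl)]
      rw [mul_zero, zero_add, mul_one, zero_sub, abs_neg, abs_of_pos hη0]
    apply le_antisymm
    · exact ciSup_le fun S => hboundS S.1
    · calc η = |(R₀ ({b} : Set ℝ)).toReal - (R₁ ({b} : Set ℝ)).toReal| := hvalb.symm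
        _ ≤ tv R₀ R₁ := le_ciSup hBdd ⟨{b}, measurableSet_singleton b⟩
  have hdiff : |meanOf R₁ - meanOf R₀| = (2:ℝ) ^ (-(1/k)) * η ^ (1 - 1/k) := by
    rw [hmean0, hmean1, show a + η * c - a = η * c by ring, abs_of_pos hηc_pos, hkey]
  refine ⟨⟨R₀, R₁, hmem0, hmem1, htv, hdiff⟩, ?_⟩
  apply le_csSup
  · refine ⟨2 * D, ?_⟩
    rintro x ⟨P, Q, hP, hQ, -, rfl⟩
    obtain ⟨hP1, hP2⟩ := hP.2.2.1
    obtain ⟨hQ1, hQ2⟩ := hQ.2.2.1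
    rw [abs_sub_le_iff]
    constructor <;> linarith
  · exact ⟨R₀, R₁, hmem0, hmem1, le_of_eq htv, by rw [abs_sub_comm]; exact hdiff.symm⟩
end

section
/- Consider locally private mean estimation without contamination over $\mathcal{P}_k$ with mean bounded in $[-D,D]$, $D < \infty$. For any sequentially interactive $\alpha$-LDP mechanism with $\alpha \in (0,1)$ and any estimator $\hat\mu$ of the privatised data, the minimax squared risk satisfies $\mathcal{R}_{n,\alpha}(0) \geq D^2/(32 \exp(64 n \alpha^2))$. -/
open MeasureTheory ENNReal ProbabilityTheory

/-- An `α`-locally differentially private channel. -/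
def IsLDP {X Z : Type*} [MeasurableSpace X] [MeasurableSpace Z] (α : ℝ)
    (Q : Kernel X Z) : Prop :=
  ∀ S : Set Z, MeasurableSet S → ∀ x x', Q x S ≤ ENNReal.ofReal (Real.exp α) * Q x' S

section aux
variable {Z : Type*} [MeasurableSpace Z]

lemma lintegral_pi_prod' {n : ℕ} (μ : Measure Z) [SigmaFinite μ]
    (f : Fin n → Z → ℝ≥0∞) (hf : ∀ i, Measurable (f i)) :
    ∫⁻ v, ∏ i, f i (v i) ∂(Measure.pi fun _ : Fin n => μ) = ∏ i, ∫⁻ z, f i z ∂μ := by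
  induction n with
  | zero =>
      rw [Measure.pi_of_empty]
      simp
  | succ m ih =>
      have hmp := measurePreserving_piFinSuccAbove (fun _ : Fin (m + 1) => μ) 0
      set e := MeasurableEquiv.piFinSuccAbove (fun _ : Fin (m + 1) => Z) 0 with he
      have hG : Measurable fun p : Z × (Fin m → Z) =>
          f 0 p.1 * ∏ j : Fin m, f (Fin.succAbove 0 j) (p.2 j) := by
        refine ((hf 0).comp measurable_fst).mul ?_
        exact Finset.measurable_prod _ fun j _ =>
          (hf _).comp ((measurable_pi_apply j).comp measurable_snd)
      calc ∫⁻ v, ∏ i, f i (v i) ∂(Measure.pi fun _ : Fin (m + 1) => μ)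
          = ∫⁻ v, (fun p : Z × (Fin m → Z) =>
              f 0 p.1 * ∏ j : Fin m, f (Fin.succAbove 0 j) (p.2 j)) (e v)
            ∂(Measure.pi fun _ : Fin (m + 1) => μ) := by
            refine lintegral_congr fun v => ?_
            have : ∏ i, f i (v i) = f 0 (v 0) * ∏ j : Fin m,
                f (Fin.succAbove 0 j) (v (Fin.succAbove 0 j)) :=
              Fin.prod_univ_succAbove (fun i => f i (v i)) 0
            rw [this]
            rfl
        _ = ∫⁻ p, f 0 p.1 * ∏ j : Fin m, f (Fin.succAbove 0 j) (p.2 j)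
              ∂(μ.prod (Measure.pi fun _ : Fin m => μ)) := hmp.lintegral_comp hG
        _ = (∫⁻ z, f 0 z ∂μ) * ∫⁻ y, ∏ j : Fin m, f (Fin.succAbove 0 j) (y j)
              ∂(Measure.pi fun _ : Fin m => μ) := by
            exact lintegral_prod_mul (hf 0).aemeasurable
              (Finset.measurable_prod _ fun j _ =>
                (hf _).comp (measurable_pi_apply j)).aemeasurable
        _ = ∏ i, ∫⁻ z, f i z ∂μ := by
            rw [ih (fun j => f (Fin.succAbove 0 j)) (fun j => hf _)]
            exact (Fin.prod_univ_succAbove (fun i => ∫⁻ z, f i z ∂μ) 0).symm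
end aux

section aux2
variable {Z : Type*} [MeasurableSpace Z]

lemma pi_withDensity' {n : ℕ} (μ ν : Measure Z) [IsFiniteMeasure μ] [IsFiniteMeasure ν]
    (f : Z → ℝ≥0∞) (hf : Measurable f) (h : μ.withDensity f = ν) :
    Measure.pi (fun _ : Fin n => ν) =
      (Measure.pi fun _ : Fin n => μ).withDensity (fun v => ∏ i, f (v i)) := by
  refine Measure.pi_eq fun s hs => ?_
  have hbox : MeasurableSet (Set.pi Set.univ s) := MeasurableSet.univ_pi hs
  have hG : Measurable fun v : Fin n → Z => ∏ i, f (v i) :=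
    Finset.measurable_prod _ fun i _ => hf.comp (measurable_pi_apply i)
  rw [withDensity_apply _ hbox, ← lintegral_indicator hbox]
  have : ∀ v : Fin n → Z, (Set.pi Set.univ s).indicator (fun v => ∏ i, f (v i)) v
      = ∏ i, (s i).indicator f (v i) := by
    intro v
    by_cases hv : v ∈ Set.pi Set.univ s
    · rw [Set.indicator_of_mem hv]
      exact Finset.prod_congr rfl fun i _ =>
        (Set.indicator_of_mem (hv i (Set.mem_univ i)) f).symm
    · rw [Set.indicator_of_notMem hv]
      simp only [Set.mem_pi, Set.mem_univ, forall_true_left, not_forall] at hv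
      obtain ⟨i, hi⟩ := hv
      exact (Finset.prod_eq_zero (Finset.mem_univ i) (Set.indicator_of_notMem hi f)).symm
  simp_rw [this]
  rw [lintegral_pi_prod' μ _ (fun i => hf.indicator (hs i))]
  refine Finset.prod_congr rfl fun i _ => ?_
  rw [← h, withDensity_apply _ (hs i), ← lintegral_indicator (hs i)]
end aux2

section aux3

/-- `2√t + t² ≥ 3t` for `t ≥ 0`. -/
lemma sqrt_key (t : ℝ) (ht : 0 ≤ t) : 3 * t ≤ 2 * Real.sqrt t + t ^ 2 := by
  have hs : 0 ≤ Real.sqrt t := Real.sqrt_nonneg t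
  have hts : t = Real.sqrt t ^ 2 := (Real.sq_sqrt ht).symm
  nlinarith [mul_nonneg (mul_nonneg hs (sq_nonneg (Real.sqrt t - 1)))
    (by linarith : (0:ℝ) ≤ Real.sqrt t + 2)]

lemma rpow_half_mul_self (x : ℝ≥0∞) : x ^ (1/2 : ℝ) * x ^ (1/2 : ℝ) = x := by
  rw [← sq, ← ENNReal.rpow_natCast (x ^ (1/2:ℝ)) 2, ← ENNReal.rpow_mul]
  norm_num

lemma prod_rpow_half {n : ℕ} (a : Fin n → ℝ≥0∞) :
    (∏ i, a i) ^ (1/2 : ℝ) = ∏ i, (a i) ^ (1/2 : ℝ) := by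
  induction n with
  | zero => simp
  | succ m ih =>
      rw [Fin.prod_univ_succ, Fin.prod_univ_succ, ENNReal.mul_rpow_of_nonneg _ _ (by norm_num),
        ih]

lemma dirac_mem_momentClass (k D c : ℝ) (hk : 1 < k) (hc : c ∈ Set.Icc (-D) D) :
    Measure.dirac c ∈ momentClass k D := by
  have hmean : meanOf (Measure.dirac c) = c := integral_dirac _ c
  refine ⟨Measure.dirac.isProbabilityMeasure, ?_, ?_, ?_⟩
  · refine ⟨measurable_id.aestronglyMeasurable, ?_⟩
    rw [HasFiniteIntegral, lintegral_dirac]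
    exact ENNReal.coe_lt_top
  · rw [hmean]; exact hc
  · rw [hmean]
    rw [integral_dirac]
    simp [Real.zero_rpow (by positivity : k ≠ 0)]

end aux3

/-- Private mean estimation with a bounded mean parameter (no contamination): for any
`α`-LDP mechanism and any estimator of the privatised data, some `P ∈ 𝒫_k` incurs squared
risk at least `D²/(32 exp(64 n α²))`. -/
theorem private_mean_lower_bound_D {Z : Type*} [MeasurableSpace Z]
    (k D : ℝ) (hk : 1 < k) (hD : 0 ≤ D) (n : ℕ) (α : ℝ) (hα0 : 0 < α) (hα1 : α < 1)
    (Q : Kernel ℝ Z) (hQ : IsMarkovKernel Q) (hLDP : IsLDP α Q)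
    (μhat : (Fin n → Z) → ℝ) (hμhat : Measurable μhat) :
    ∃ P ∈ momentClass k D,
      ENNReal.ofReal (D ^ 2 / (32 * Real.exp (64 * n * α ^ 2))) ≤
        ∫⁻ v, ENNReal.ofReal ((μhat v - meanOf P) ^ 2)
          ∂(Measure.pi fun _ : Fin n => P.bind (fun x => Q x)) := by
  classical
  have hQmeas : Measurable fun x : ℝ => Q x := Q.measurable
  haveI : ∀ x : ℝ, IsProbabilityMeasure (Q x) := fun x => hQ.isProbabilityMeasure x
  set M₁ : Measure Z := Q (-D) with hM₁
  set M₂ : Measure Z := Q D with hM₂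
  have hle12 : ∀ s : Set Z, MeasurableSet s → M₁ s ≤ ENNReal.ofReal (Real.exp α) * M₂ s :=
    fun s hs => hLDP s hs _ _
  have hle21 : ∀ s : Set Z, MeasurableSet s → M₂ s ≤ ENNReal.ofReal (Real.exp α) * M₁ s :=
    fun s hs => hLDP s hs _ _
  have hac : M₁ ≪ M₂ := by
    intro s hs
    have h1 : M₂ (toMeasurable M₂ s) = 0 := by rwa [measure_toMeasurable]
    have h2 := hle12 _ (measurableSet_toMeasurable M₂ s)
    rw [h1, mul_zero] at h2
    exact le_antisymm ((measure_mono (subset_toMeasurable M₂ s)).trans h2) zero_le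
  set g0 := M₁.rnDeriv M₂ with hg0
  have hg0m : Measurable g0 := Measure.measurable_rnDeriv _ _
  set eL := ENNReal.ofReal (Real.exp (-α)) with heL
  set eU := ENNReal.ofReal (Real.exp α) with heU
  have heLU : eL ≤ eU := ENNReal.ofReal_le_ofReal (Real.exp_le_exp.2 (by linarith))
  have heLU1 : eL * eU = 1 := by
    rw [heL, heU, ← ENNReal.ofReal_mul (Real.exp_nonneg _), ← Real.exp_add]
    simp
  have hub : g0 ≤ᵐ[M₂] fun _ => eU := by
    refine ae_le_of_forall_setLIntegral_le_of_sigmaFinite₀ hg0m.aemeasurable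
      (fun s hs _ => ?_)
    rw [Measure.setLIntegral_rnDeriv' hac hs, setLIntegral_const]
    exact hle12 s hs
  have hlb : (fun _ : Z => eL) ≤ᵐ[M₂] g0 := by
    refine ae_le_of_forall_setLIntegral_le_of_sigmaFinite₀ aemeasurable_const
      (fun s hs _ => ?_)
    rw [Measure.setLIntegral_rnDeriv' hac hs, setLIntegral_const]
    calc eL * M₂ s ≤ eL * (eU * M₁ s) := mul_le_mul_right (hle21 s hs) _
      _ = M₁ s := by rw [← mul_assoc, heLU1, one_mul]
  set g : Z → ℝ≥0∞ := fun z => max eL (min (g0 z) eU) with hgdef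
  have hgm : Measurable g := measurable_const.max (hg0m.min measurable_const)
  have hgL : ∀ z, eL ≤ g z := fun z => le_max_left _ _
  have hgU : ∀ z, g z ≤ eU := fun z => max_le heLU (min_le_right _ _)
  have hgfin : ∀ z, g z ≠ ∞ := fun z => ((hgU z).trans_lt ENNReal.ofReal_lt_top).ne
  have hgg0 : g =ᵐ[M₂] g0 := by
    filter_upwards [hub, hlb] with z h1 h2
    simp only [hgdef]
    rw [min_eq_left h1, max_eq_right h2]
  have hwd : M₂.withDensity g = M₁ := by
    rw [withDensity_congr_ae hgg0, Measure.withDensity_rnDeriv_eq _ _ hac]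
  have hint : ∫⁻ z, g z ∂M₂ = 1 := by
    have h := congrArg (fun m : Measure Z => m Set.univ) hwd
    simp only [withDensity_apply _ MeasurableSet.univ, Measure.restrict_univ] at h
    rw [h]
    exact measure_univ
  set ρ := ∫⁻ z, g z ^ (1/2 : ℝ) ∂M₂ with hρdef
  have hρm : Measurable fun z => g z ^ (1/2 : ℝ) := hgm.pow_const _
  have hρ_lb : ENNReal.ofReal (Real.exp (-(32 * α ^ 2))) ≤ ρ := by
    rcases le_or_gt α (1/2) with hcase | hcase
    · -- quadratic route
      have hα2 : Real.exp α - 1 ≤ 2 * α := by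
        have h1 : 1 - α ≤ Real.exp (-α) := by
          have := Real.add_one_le_exp (-α); linarith
        have h2 : Real.exp α * Real.exp (-α) = 1 := by
          rw [← Real.exp_add]; simp
        nlinarith [Real.exp_pos α, Real.exp_pos (-α)]
      have hpt : ∀ z, g z ^ 2 + 1 ≤ 2 * g z + ENNReal.ofReal (4 * α ^ 2) := by
        intro z
        set t := (g z).toReal with ht
        have hgz : g z = ENNReal.ofReal t := (ENNReal.ofReal_toReal (hgfin z)).symm
        have ht0 : 0 ≤ t := ENNReal.toReal_nonneg
        have htL : Real.exp (-α) ≤ t := by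
          have := ENNReal.toReal_mono (hgfin z) (hgL z)
          rwa [heL, ENNReal.toReal_ofReal (Real.exp_nonneg _)] at this
        have htU : t ≤ Real.exp α := by
          have := ENNReal.toReal_mono (by simp [heU]) (hgU z)
          rwa [heU, ENNReal.toReal_ofReal (Real.exp_nonneg _)] at this
        have hreal : t ^ 2 + 1 ≤ 2 * t + 4 * α ^ 2 := by
          have habs : (t - 1) ^ 2 ≤ (2 * α) ^ 2 := by
            have h1 : t - 1 ≤ 2 * α := by linarith
            have h2 : -(2 * α) ≤ t - 1 := by
              have h3 : 1 - Real.exp (-α) ≤ 2 * α := by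
                have := Real.add_one_le_exp (-α); linarith
              linarith
            nlinarith
          nlinarith
        rw [hgz, ← ENNReal.ofReal_pow ht0, ← ENNReal.ofReal_one,
          ← ENNReal.ofReal_add (by positivity) (by norm_num),
          ← ENNReal.ofReal_ofNat 2, ← ENNReal.ofReal_mul (by norm_num),
          ← ENNReal.ofReal_add (by positivity) (by positivity)]
        exact ENNReal.ofReal_le_ofReal hreal
      have hS : ∫⁻ z, g z ^ 2 ∂M₂ ≤ 1 + ENNReal.ofReal (4 * α ^ 2) := by
        have h1 : ∫⁻ z, (g z ^ 2 + 1) ∂M₂ ≤ ∫⁻ z, (2 * g z + ENNReal.ofReal (4 * α ^ 2)) ∂M₂ :=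
          lintegral_mono hpt
        rw [lintegral_add_right _ measurable_const, lintegral_add_right _ measurable_const,
          lintegral_const, lintegral_const, lintegral_const_mul _ hgm, hint] at h1
        simp only [measure_univ, mul_one, one_mul] at h1
        have h2 : ∫⁻ z, g z ^ 2 ∂M₂ + 1 ≤ (1 + ENNReal.ofReal (4 * α ^ 2)) + 1 := by
          calc ∫⁻ z, g z ^ 2 ∂M₂ + 1 ≤ 2 + ENNReal.ofReal (4 * α ^ 2) := h1
            _ = (1 + ENNReal.ofReal (4 * α ^ 2)) + 1 := by ring
        exact (ENNReal.add_le_add_iff_right ENNReal.one_ne_top).mp h2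
      have hnn : (0:ℝ) ≤ 1 - 2 * α ^ 2 := by nlinarith
      have h3 : (3 : ℝ≥0∞) ≤ 2 * ρ + ∫⁻ z, g z ^ 2 ∂M₂ := by
        have hpt2 : ∀ z, 3 * g z ≤ 2 * g z ^ (1/2 : ℝ) + g z ^ 2 := by
          intro z
          set t := (g z).toReal with ht
          have hgz : g z = ENNReal.ofReal t := (ENNReal.ofReal_toReal (hgfin z)).symm
          have ht0 : 0 ≤ t := ENNReal.toReal_nonneg
          rw [hgz, ENNReal.ofReal_rpow_of_nonneg ht0 (by norm_num), ← Real.sqrt_eq_rpow,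
            ← ENNReal.ofReal_pow ht0, ← ENNReal.ofReal_ofNat 3, ← ENNReal.ofReal_ofNat 2,
            ← ENNReal.ofReal_mul (by norm_num), ← ENNReal.ofReal_mul (by norm_num),
            ← ENNReal.ofReal_add (by positivity) (by positivity)]
          exact ENNReal.ofReal_le_ofReal (sqrt_key t ht0)
        calc (3:ℝ≥0∞) = ∫⁻ z, 3 * g z ∂M₂ := by rw [lintegral_const_mul _ hgm, hint, mul_one]
          _ ≤ ∫⁻ z, (2 * g z ^ (1/2:ℝ) + g z ^ 2) ∂M₂ := lintegral_mono hpt2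
          _ = 2 * ρ + ∫⁻ z, g z ^ 2 ∂M₂ := by
              rw [lintegral_add_right _ (hgm.pow_const _), lintegral_const_mul _ hρm]
      have h4 : (2:ℝ≥0∞) ≤ 2 * ρ + ENNReal.ofReal (4 * α ^ 2) := by
        have h5 : (2:ℝ≥0∞) + 1 ≤ (2 * ρ + ENNReal.ofReal (4 * α ^ 2)) + 1 := by
          calc (2:ℝ≥0∞) + 1 = 3 := by norm_num
            _ ≤ 2 * ρ + (1 + ENNReal.ofReal (4 * α ^ 2)) := h3.trans (add_le_add_right hS _)
            _ = (2 * ρ + ENNReal.ofReal (4 * α ^ 2)) + 1 := by ring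
        exact (ENNReal.add_le_add_iff_right ENNReal.one_ne_top).mp h5
      have h6 : ENNReal.ofReal (1 - 2 * α ^ 2) ≤ ρ := by
        have h7 : 2 * ENNReal.ofReal (1 - 2 * α ^ 2) + ENNReal.ofReal (4 * α ^ 2)
            ≤ 2 * ρ + ENNReal.ofReal (4 * α ^ 2) := by
          calc 2 * ENNReal.ofReal (1 - 2 * α ^ 2) + ENNReal.ofReal (4 * α ^ 2)
              = ENNReal.ofReal (2 * (1 - 2 * α ^ 2) + 4 * α ^ 2) := by
                rw [ENNReal.ofReal_add (by positivity) (by positivity),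
                  ← ENNReal.ofReal_ofNat 2, ← ENNReal.ofReal_mul (by norm_num)]
            _ = 2 := by rw [show (2:ℝ) * (1 - 2 * α ^ 2) + 4 * α ^ 2 = 2 by ring]; norm_num
            _ ≤ 2 * ρ + ENNReal.ofReal (4 * α ^ 2) := h4
        have h8 := (ENNReal.add_le_add_iff_right ENNReal.ofReal_ne_top).mp h7
        exact (ENNReal.mul_le_mul_iff_right two_ne_zero ENNReal.ofNat_ne_top).mp h8
      refine le_trans (ENNReal.ofReal_le_ofReal ?_) h6
      have hE := Real.add_one_le_exp (32 * α ^ 2)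
      have hEpos : (0:ℝ) < Real.exp (32 * α ^ 2) := Real.exp_pos _
      rw [Real.exp_neg, inv_eq_one_div, div_le_iff₀ hEpos]
      have h30 : (0:ℝ) ≤ 30 - 64 * α ^ 2 := by nlinarith
      have h9 : (1:ℝ) ≤ (1 - 2 * α ^ 2) * (32 * α ^ 2 + 1) := by nlinarith [sq_nonneg α, mul_nonneg (sq_nonneg α) h30]
      nlinarith [mul_le_mul_of_nonneg_left hE hnn]
    · -- pointwise route
      have hpt : ∀ z, ENNReal.ofReal (Real.exp (-(α/2))) ≤ g z ^ (1/2 : ℝ) := by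
        intro z
        calc ENNReal.ofReal (Real.exp (-(α/2)))
            = eL ^ (1/2 : ℝ) := by
              rw [heL, ENNReal.ofReal_rpow_of_nonneg (Real.exp_nonneg _) (by norm_num),
                ← Real.exp_mul, show (-α) * (1/2:ℝ) = -(α/2) by ring]
          _ ≤ g z ^ (1/2 : ℝ) := ENNReal.rpow_le_rpow (hgL z) (by norm_num)
      calc ENNReal.ofReal (Real.exp (-(32 * α ^ 2)))
          ≤ ENNReal.ofReal (Real.exp (-(α/2))) := by
            refine ENNReal.ofReal_le_ofReal (Real.exp_le_exp.2 ?_)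
            nlinarith
        _ = ∫⁻ _, ENNReal.ofReal (Real.exp (-(α/2))) ∂M₂ := by
            rw [lintegral_const, measure_univ, mul_one]
        _ ≤ ρ := lintegral_mono hpt
  -- product measures
  set ν₂ : Measure (Fin n → Z) := Measure.pi fun _ : Fin n => M₂ with hν₂
  set G : (Fin n → Z) → ℝ≥0∞ := fun v => ∏ i, g (v i) with hG
  have hGm : Measurable G := Finset.measurable_prod _ fun i _ => hgm.comp (measurable_pi_apply i)
  have hpiwd : (Measure.pi fun _ : Fin n => M₁) = ν₂.withDensity G :=
    pi_withDensity' M₂ M₁ g hgm hwd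
  have hGint : ∫⁻ v, G v ∂ν₂ = 1 := by
    simp only [hG, hν₂]
    rw [lintegral_pi_prod' M₂ (fun _ => g) (fun _ => hgm)]
    simp [hint]
  have half2 : ∀ x : ℝ≥0∞, (x ^ (1/2 : ℝ)) ^ (2 : ℝ) = x := by
    intro x
    rw [← ENNReal.rpow_mul]
    norm_num
  have hGhalf : ∫⁻ v, G v ^ (1/2:ℝ) ∂ν₂ = ρ ^ n := by
    have h1 : ∀ v, G v ^ (1/2:ℝ) = ∏ i, g (v i) ^ (1/2:ℝ) := fun v => prod_rpow_half _
    simp only [h1, hν₂]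
    rw [lintegral_pi_prod' M₂ (fun _ => fun z => g z ^ (1/2:ℝ)) (fun _ => hρm)]
    rw [hρdef]
    norm_num
  set mf : (Fin n → Z) → ℝ≥0∞ := fun v => min (G v) 1 with hmf
  have hmfm : Measurable mf := hGm.min measurable_const
  have hxm : Measurable fun v => max (G v) 1 := hGm.max measurable_const
  have hmaxint : ∫⁻ v, max (G v) 1 ∂ν₂ ≤ 2 := by
    calc ∫⁻ v, max (G v) 1 ∂ν₂ ≤ ∫⁻ v, (G v + 1) ∂ν₂ :=
        lintegral_mono fun v => max_le (le_add_right le_rfl) (le_add_left le_rfl)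
      _ = 2 := by
          rw [lintegral_add_right _ measurable_const, hGint, lintegral_one, measure_univ]
          norm_num
  have hCS : ρ ^ n ≤ (∫⁻ v, mf v ∂ν₂) ^ (1/2:ℝ) * 2 ^ (1/2:ℝ) := by
    have h1 : ∀ v, G v ^ (1/2:ℝ) = mf v ^ (1/2:ℝ) * (max (G v) 1) ^ (1/2:ℝ) := by
      intro v
      rw [← ENNReal.mul_rpow_of_nonneg _ _ (by norm_num : (0:ℝ) ≤ 1/2), min_mul_max, mul_one]
    rw [← hGhalf]
    calc ∫⁻ v, G v ^ (1/2:ℝ) ∂ν₂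
        = ∫⁻ v, mf v ^ (1/2:ℝ) * (max (G v) 1) ^ (1/2:ℝ) ∂ν₂ := lintegral_congr h1
      _ ≤ (∫⁻ v, (mf v ^ (1/2:ℝ)) ^ (2:ℝ) ∂ν₂) ^ (1/(2:ℝ)) *
            (∫⁻ v, ((max (G v) 1) ^ (1/2:ℝ)) ^ (2:ℝ) ∂ν₂) ^ (1/(2:ℝ)) := by
          refine ENNReal.lintegral_mul_le_Lp_mul_Lq ν₂ ?_ (hmfm.pow_const _).aemeasurable
            (hxm.pow_const _).aemeasurable
          constructor <;> norm_num
      _ = (∫⁻ v, mf v ∂ν₂) ^ (1/2:ℝ) * (∫⁻ v, max (G v) 1 ∂ν₂) ^ (1/2:ℝ) := by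
          simp_rw [half2]
      _ ≤ (∫⁻ v, mf v ∂ν₂) ^ (1/2:ℝ) * 2 ^ (1/2:ℝ) :=
          mul_le_mul' le_rfl (ENNReal.rpow_le_rpow hmaxint (by norm_num))
  have hm_lb : ρ ^ (2 * n) ≤ 2 * ∫⁻ v, mf v ∂ν₂ := by
    calc ρ ^ (2*n) = ρ ^ n * ρ ^ n := by rw [two_mul, pow_add]
      _ ≤ ((∫⁻ v, mf v ∂ν₂) ^ (1/2:ℝ) * 2 ^ (1/2:ℝ)) *
            ((∫⁻ v, mf v ∂ν₂) ^ (1/2:ℝ) * 2 ^ (1/2:ℝ)) := mul_le_mul' hCS hCS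
      _ = ((∫⁻ v, mf v ∂ν₂)^(1/2:ℝ) * (∫⁻ v, mf v ∂ν₂)^(1/2:ℝ)) *
            ((2:ℝ≥0∞)^(1/2:ℝ) * 2^(1/2:ℝ)) := by ring
      _ = (∫⁻ v, mf v ∂ν₂) * 2 := by rw [rpow_half_mul_self, rpow_half_mul_self]
      _ = 2 * ∫⁻ v, mf v ∂ν₂ := mul_comm _ _
  -- risk functions
  set A : (Fin n → Z) → ℝ≥0∞ := fun v => ENNReal.ofReal ((μhat v - (-D)) ^ 2) with hA
  set B : (Fin n → Z) → ℝ≥0∞ := fun v => ENNReal.ofReal ((μhat v - D) ^ 2) with hB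
  have hAm : Measurable A := ((hμhat.sub_const _).pow_const 2).ennreal_ofReal
  have hBm : Measurable B := ((hμhat.sub_const _).pow_const 2).ennreal_ofReal
  have hsum : ENNReal.ofReal (2 * D ^ 2) * ∫⁻ v, mf v ∂ν₂ ≤
      (∫⁻ v, A v ∂(ν₂.withDensity G)) + ∫⁻ v, B v ∂ν₂ := by
    rw [lintegral_withDensity_eq_lintegral_mul _ hGm hAm, ← lintegral_add_right _ hBm,
      ← lintegral_const_mul _ hmfm]
    refine lintegral_mono fun v => ?_
    simp only [Pi.mul_apply]
    have h1 : mf v * A v ≤ G v * A v := mul_le_mul' (min_le_left _ _) le_rfl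
    have h2 : mf v * B v ≤ B v := by
      calc mf v * B v ≤ 1 * B v := mul_le_mul' (min_le_right _ _) le_rfl
        _ = B v := one_mul _
    have h3 : ENNReal.ofReal (2 * D ^ 2) ≤ A v + B v := by
      rw [hA, hB, ← ENNReal.ofReal_add (sq_nonneg _) (sq_nonneg _)]
      refine ENNReal.ofReal_le_ofReal ?_
      nlinarith [sq_nonneg (μhat v)]
    calc ENNReal.ofReal (2*D^2) * mf v ≤ (A v + B v) * mf v := mul_le_mul' h3 le_rfl
      _ = mf v * A v + mf v * B v := by ring
      _ ≤ G v * A v + B v := add_le_add h1 h2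
  set T := ENNReal.ofReal (D ^ 2 / (32 * Real.exp (64 * n * α ^ 2))) with hT
  have hρ2n : ENNReal.ofReal (Real.exp (-(64 * n * α ^ 2))) ≤ ρ ^ (2 * n) := by
    calc ENNReal.ofReal (Real.exp (-(64 * n * α ^ 2)))
        = ENNReal.ofReal (Real.exp (-(32 * α ^ 2)) ^ (2 * n)) := by
          rw [← Real.exp_nat_mul]
          congr 1
          push_cast
          ring
      _ = ENNReal.ofReal (Real.exp (-(32 * α ^ 2))) ^ (2 * n) :=
          ENNReal.ofReal_pow (Real.exp_nonneg _) _
      _ ≤ ρ ^ (2 * n) := pow_le_pow_left₀ zero_le hρ_lb _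
  have hfinal : 4 * T ≤ 2 * ((∫⁻ v, A v ∂(ν₂.withDensity G)) + ∫⁻ v, B v ∂ν₂) := by
    calc 4 * T ≤ ENNReal.ofReal (2 * D ^ 2) * ENNReal.ofReal (Real.exp (-(64 * n * α ^ 2))) := by
          rw [hT, ← ENNReal.ofReal_mul (by positivity : (0:ℝ) ≤ 2 * D ^ 2),
            show (4:ℝ≥0∞) = ENNReal.ofReal 4 by norm_num,
            ← ENNReal.ofReal_mul (by norm_num : (0:ℝ) ≤ 4)]
          refine ENNReal.ofReal_le_ofReal ?_
          have hEpos : (0:ℝ) < Real.exp (64 * n * α ^ 2) := Real.exp_pos _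
          rw [Real.exp_neg]
          have hD2 : (0:ℝ) ≤ D ^ 2 * (Real.exp (64 * n * α ^ 2))⁻¹ := by positivity
          have heq : 4 * (D ^ 2 / (32 * Real.exp (64 * n * α ^ 2)))
              = (D ^ 2 * (Real.exp (64 * n * α ^ 2))⁻¹) / 8 := by
            field_simp
            ring
          rw [heq]
          linarith
      _ ≤ ENNReal.ofReal (2 * D ^ 2) * ρ ^ (2*n) := mul_le_mul' le_rfl hρ2n
      _ ≤ ENNReal.ofReal (2 * D ^ 2) * (2 * ∫⁻ v, mf v ∂ν₂) := mul_le_mul' le_rfl hm_lb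
      _ = 2 * (ENNReal.ofReal (2 * D ^ 2) * ∫⁻ v, mf v ∂ν₂) := by ring
      _ ≤ 2 * ((∫⁻ v, A v ∂(ν₂.withDensity G)) + ∫⁻ v, B v ∂ν₂) := mul_le_mul' le_rfl hsum
  by_cases hchoice : T ≤ ∫⁻ v, A v ∂(ν₂.withDensity G)
  · refine ⟨Measure.dirac (-D), dirac_mem_momentClass k D (-D) hk ⟨le_rfl, by linarith⟩, ?_⟩
    have hmean : meanOf (Measure.dirac (-D)) = -D := integral_dirac _ _
    simp only [Measure.dirac_bind hQmeas, hmean]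
    rw [← hM₁, hpiwd]
    exact hchoice
  · have hBge : T ≤ ∫⁻ v, B v ∂ν₂ := by
      by_contra hB2
      push_neg at hB2
      have hAlt := lt_of_not_ge hchoice
      have hlt : 2 * ((∫⁻ v, A v ∂(ν₂.withDensity G)) + ∫⁻ v, B v ∂ν₂) < 4 * T := by
        have hsum2 : (∫⁻ v, A v ∂(ν₂.withDensity G)) + ∫⁻ v, B v ∂ν₂ < 2 * T := by
          calc (∫⁻ v, A v ∂(ν₂.withDensity G)) + ∫⁻ v, B v ∂ν₂
              < T + T := ENNReal.add_lt_add hAlt hB2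
            _ = 2 * T := (two_mul T).symm
        calc 2 * ((∫⁻ v, A v ∂(ν₂.withDensity G)) + ∫⁻ v, B v ∂ν₂)
            < 2 * (2 * T) := (ENNReal.mul_lt_mul_iff_right two_ne_zero ENNReal.ofNat_ne_top).mpr hsum2
          _ = 4 * T := by ring
      exact absurd hfinal (not_le.mpr hlt)
    refine ⟨Measure.dirac D, dirac_mem_momentClass k D D hk ⟨by linarith, le_rfl⟩, ?_⟩
    have hmean : meanOf (Measure.dirac D) = D := integral_dirac _ _
    simp only [Measure.dirac_bind hQmeas, hmean]
    exact hBge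
end
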